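/- arXiv:2109.12782 — 3 statements merged into one kernel-verified Lean document; each statement's English description precedes it below -/
import Mathlib

section
/- Let k, c, e and s be integers with k ≥ 2 and e, s ≥ 1, and let p be a prime number not dividing e. Then 𝒩_{k,c,e}(p^s) = p^{(k−1)(s−1)} · 𝒩_{k,c,e}(p). -/
/-- `excCount k c e n` is 𝒩_{k,c,e}(n): the number of `k`-tuples of exceptional
units of `ℤ_n` (i.e. elements `u` with both `u` and `1 - u` units) whose `e`-th
powers sum to `c` modulo `n`. -/
noncomputable def excCount (k : ℕ) (c : ℤ) (e : ℕ) (n : ℕ) : ℕ :=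
  Nat.card {x : Fin k → ZMod n //
    (∀ i, IsUnit (x i) ∧ IsUnit (1 - x i)) ∧ ∑ i, (x i) ^ e = (c : ZMod n)}

/-!
Reduction modulo `p ^ s` sends solutions modulo `p ^ (s + 1)` to solutions, and for `s ≥ 1` a
residue is an exceptional unit iff its reduction is, since both conditions are read off modulo
`p`. The lifts of a solution `y` are `Y + p ^ s • t` with `t ∈ (ℤ/p)^k`; as `(p ^ s)² = 0` modulo
`p ^ (s + 1)`, the equation becomes the linear condition `∑ e Y_i ^ (e - 1) t_i = const` over
`ℤ/p`, whose coefficients are nonzero because `p ∤ e` and the `Y_i` are units. Hence every fibre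
has `p ^ (k - 1)` elements, and induction on `s` gives the formula.
-/

theorem Nat.card_eq_card_mul_of_card_fiber {α β : Type*} [Finite α] [Finite β] (f : α → β)
    {n : ℕ} (hf : ∀ y, Nat.card {x // f x = y} = n) : Nat.card α = Nat.card β * n := by
  have := Fintype.ofFinite β
  rw [← Nat.card_congr (Equiv.sigmaFiberEquiv f), Nat.card_sigma]
  simp [hf, Nat.card_eq_fintype_card]

theorem add_pow_of_sq_eq_zero {R : Type*} [CommRing R] (x y : R) (hy : y ^ 2 = 0) (e : ℕ) :
    (x + y) ^ e = x ^ e + e * x ^ (e - 1) * y := by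
  simpa [Polynomial.derivative_X_pow] using
    Polynomial.eval_add_of_sq_eq_zero (Polynomial.X ^ e) x y hy

theorem card_linear_equation_solutions {F : Type*} [Field F] {k : ℕ} (b : Fin (k + 1) → F)
    (hb : b 0 ≠ 0) (d : F) :
    Nat.card {t : Fin (k + 1) → F // ∑ i, b i * t i = d} = Nat.card F ^ k := by
  have head_eq {t : Fin (k + 1) → F} :
      ∑ i, b i * t i = d ↔ t 0 = (d - ∑ j : Fin k, b j.succ * t j.succ) / b 0 := by
    rw [Fin.sum_univ_succ, eq_div_iff hb]
    constructor <;> intro h <;> linear_combination h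
  let solutionsEquiv : {t : Fin (k + 1) → F // ∑ i, b i * t i = d} ≃ (Fin k → F) :=
    { toFun t := Fin.tail t.1
      invFun t' := ⟨Fin.cons ((d - ∑ j, b j.succ * t' j) / b 0) t', by simp [head_eq]⟩
      left_inv t := by
        ext1
        rw [← Fin.cons_self_tail t.1, head_eq.1 t.2]
        rfl
      right_inv t' := Fin.tail_cons _ _ }
  rw [Nat.card_congr solutionsEquiv, Nat.card_fun, Nat.card_eq_fintype_card (α := Fin k),
    Fintype.card_fin]

def IsExceptionalUnit {R : Type*} [Ring R] (u : R) : Prop :=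
  IsUnit u ∧ IsUnit (1 - u)

theorem IsExceptionalUnit.map {R S : Type*} [Ring R] [Ring S] (f : R →+* S) {u : R}
    (hu : IsExceptionalUnit u) : IsExceptionalUnit (f u) :=
  ⟨hu.1.map f, by simpa using hu.2.map f⟩

abbrev ExcSolutions (R : Type*) [CommRing R] (k : ℕ) (c : ℤ) (e : ℕ) : Type _ :=
  {x : Fin k → R // (∀ i, IsExceptionalUnit (x i)) ∧ ∑ i, x i ^ e = (c : R)}

def ExcSolutions.map {R S : Type*} [CommRing R] [CommRing S] (f : R →+* S) {k : ℕ} {c : ℤ}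
    {e : ℕ} (x : ExcSolutions R k c e) : ExcSolutions S k c e :=
  ⟨fun i => f (x.1 i), fun i => (x.2.1 i).map f, by simp [← map_pow, ← map_sum, x.2.2]⟩

namespace ZMod

theorem exists_eq_mul_of_castHom_eq_zero {m n : ℕ} [NeZero n] (h : m ∣ n) {z : ZMod n}
    (hz : castHom h (ZMod m) z = 0) : ∃ w : ZMod n, z = m * w := by
  rw [castHom_apply, cast_eq_val, natCast_eq_zero_iff] at hz
  obtain ⟨w, hw⟩ := hz
  exact ⟨w, by rw [← natCast_zmod_val z, hw, Nat.cast_mul]⟩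

theorem natCast_mul_eq_natCast_mul_iff {a b n : ℕ} [NeZero n] (h : a * b = n) (u v : ZMod n) :
    (a : ZMod n) * u = a * v ↔
      castHom (Dvd.intro_left a h) (ZMod b) u = castHom (Dvd.intro_left a h) (ZMod b) v := by
  subst h
  have ha : a ≠ 0 := left_ne_zero_of_mul (NeZero.ne (a * b))
  rw [← natCast_zmod_val u, ← natCast_zmod_val v, ← Nat.cast_mul, ← Nat.cast_mul, map_natCast,
    map_natCast, natCast_eq_natCast_iff', natCast_eq_natCast_iff', Nat.mul_mod_mul_left,
    Nat.mul_mod_mul_left]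
  exact Nat.mul_right_inj ha

theorem isUnit_iff_isUnit_castHom_prime {p d : ℕ} [Fact p.Prime] (hd : d ≠ 0)
    (z : ZMod (p ^ d)) :
    IsUnit z ↔ IsUnit (castHom (dvd_pow_self p hd) (ZMod p) z) := by
  rw [isUnit_iff_ne_zero, ← natCast_zmod_val z, isUnit_natCast_iff_not_dvd_pow Fact.out
    (Nat.pos_of_ne_zero hd), map_natCast, Ne, natCast_eq_zero_iff]

theorem isUnit_castHom_pow_iff {p s t : ℕ} [Fact p.Prime] (hs : s ≠ 0) (h : s ≤ t)
    (z : ZMod (p ^ t)) :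
    IsUnit (castHom (pow_dvd_pow p h) (ZMod (p ^ s)) z) ↔ IsUnit z := by
  rw [isUnit_iff_isUnit_castHom_prime hs, isUnit_iff_isUnit_castHom_prime (by omega) z,
    ← RingHom.comp_apply, castHom_comp]

theorem isExceptionalUnit_castHom_pow_iff {p s t : ℕ} [Fact p.Prime] (hs : s ≠ 0)
    (h : s ≤ t) (z : ZMod (p ^ t)) :
    IsExceptionalUnit (castHom (pow_dvd_pow p h) (ZMod (p ^ s)) z) ↔ IsExceptionalUnit z := by
  rw [IsExceptionalUnit, IsExceptionalUnit,
    ← map_one (castHom (pow_dvd_pow p h) (ZMod (p ^ s))), ← map_sub,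
    isUnit_castHom_pow_iff hs h, isUnit_castHom_pow_iff hs h]

variable {p : ℕ} [NeZero p] {s : ℕ}

/-- The isomorphism of `ZMod p` onto the kernel `p ^ s ℤ / p ^ (s + 1) ℤ` of reduction
modulo `p ^ s`. -/
def powMul (p : ℕ) [NeZero p] (s : ℕ) : ZMod p →+ ZMod (p ^ (s + 1)) where
  toFun t := (p ^ s : ℕ) * (t.val : ZMod (p ^ (s + 1)))
  map_zero' := by simp
  map_add' a b := by
    rw [← mul_add, natCast_mul_eq_natCast_mul_iff (pow_succ p s).symm]
    simp only [map_add, map_natCast, natCast_zmod_val]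

theorem powMul_apply (t : ZMod p) :
    powMul p s t = (p ^ s : ℕ) * (t.val : ZMod (p ^ (s + 1))) :=
  rfl

theorem natCast_pow_mul_eq_powMul_iff (u : ZMod (p ^ (s + 1))) (t : ZMod p) :
    ((p ^ s : ℕ) : ZMod (p ^ (s + 1))) * u = powMul p s t ↔
      castHom (dvd_pow_self p s.add_one_ne_zero) (ZMod p) u = t := by
  rw [powMul_apply, natCast_mul_eq_natCast_mul_iff (pow_succ p s).symm, map_natCast,
    natCast_zmod_val]

theorem powMul_mul (t : ZMod p) (z : ZMod (p ^ (s + 1))) :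
    powMul p s t * z =
      powMul p s (t * castHom (dvd_pow_self p s.add_one_ne_zero) (ZMod p) z) := by
  rw [powMul_apply t, mul_assoc, natCast_pow_mul_eq_powMul_iff,
    map_mul, map_natCast, natCast_zmod_val]

theorem castHom_powMul (t : ZMod p) :
    castHom (pow_dvd_pow p (s.le_add_right 1)) (ZMod (p ^ s)) (powMul p s t) = 0 := by
  rw [powMul_apply, map_mul, map_natCast, natCast_self, zero_mul]

theorem castHom_prime_powMul (hs : s ≠ 0) (t : ZMod p) :
    castHom (dvd_pow_self p s.add_one_ne_zero) (ZMod p) (powMul p s t) = 0 := by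
  rw [← castHom_comp (dvd_pow_self p hs) (pow_dvd_pow p (s.le_add_right 1)), RingHom.comp_apply,
    castHom_powMul, map_zero]

theorem powMul_sq (hs : s ≠ 0) (t : ZMod p) : powMul p s t ^ 2 = 0 := by
  rw [sq, powMul_mul, castHom_prime_powMul hs, mul_zero, map_zero]

theorem powMul_injective : Function.Injective (powMul p s) := by
  refine (injective_iff_map_eq_zero _).2 fun t ht => ?_
  rw [← (natCast_pow_mul_eq_powMul_iff 0 t).1 (by rw [ht, mul_zero]), map_zero]

theorem exists_eq_add_powMul {x x' : ZMod (p ^ (s + 1))}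
    (h : castHom (pow_dvd_pow p (s.le_add_right 1)) (ZMod (p ^ s)) x =
      castHom (pow_dvd_pow p (s.le_add_right 1)) (ZMod (p ^ s)) x') :
    ∃ t, x = x' + powMul p s t := by
  obtain ⟨w, hw⟩ := exists_eq_mul_of_castHom_eq_zero (pow_dvd_pow p (s.le_add_right 1))
    (by rw [map_sub, h, sub_self] : castHom _ (ZMod (p ^ s)) (x - x') = 0)
  refine ⟨castHom (dvd_pow_self p s.add_one_ne_zero) (ZMod p) w, ?_⟩
  rw [← sub_eq_iff_eq_add', hw, natCast_pow_mul_eq_powMul_iff]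

theorem add_powMul_pow (hs : s ≠ 0) (x : ZMod (p ^ (s + 1))) (t : ZMod p) (e : ℕ) :
    (x + powMul p s t) ^ e = x ^ e +
      powMul p s (t * castHom (dvd_pow_self p s.add_one_ne_zero) (ZMod p) (e * x ^ (e - 1))) := by
  rw [add_pow_of_sq_eq_zero _ _ (powMul_sq hs t), mul_comm, powMul_mul]

theorem sum_add_powMul_pow_eq_iff (hs : s ≠ 0) {k e : ℕ} {Y : Fin k → ZMod (p ^ (s + 1))}
    {z : ZMod (p ^ (s + 1))} {w : ZMod p} (hw : ∑ i, Y i ^ e = z + powMul p s w)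
    (t : Fin k → ZMod p) :
    ∑ i, (Y i + powMul p s (t i)) ^ e = z ↔
      ∑ i, castHom (dvd_pow_self p s.add_one_ne_zero) (ZMod p) (e * Y i ^ (e - 1)) * t i = -w := by
  rw [eq_neg_iff_add_eq_zero, add_comm _ w]
  simp only [add_powMul_pow hs, Finset.sum_add_distrib, hw, ← map_sum, add_assoc, ← map_add,
    add_eq_left, map_eq_zero_iff _ powMul_injective, mul_comm (t _)]

end ZMod

open ZMod in
theorem card_fiber_excSolutions_map {p : ℕ} [Fact p.Prime] {s : ℕ} (hs : s ≠ 0) {k : ℕ}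
    {c : ℤ} {e : ℕ} (hpe : ¬ p ∣ e) (y : ExcSolutions (ZMod (p ^ s)) (k + 1) c e) :
    Nat.card {x : ExcSolutions (ZMod (p ^ (s + 1))) (k + 1) c e //
      x.map (castHom (pow_dvd_pow p (s.le_add_right 1)) (ZMod (p ^ s))) = y} = p ^ k := by
  set ρ := castHom (pow_dvd_pow p (s.le_add_right 1)) (ZMod (p ^ s))
  set π := castHom (dvd_pow_self p s.add_one_ne_zero) (ZMod p)
  choose Y hY using fun i => castHom_surjective (pow_dvd_pow p (s.le_add_right 1)) (y.1 i)
  obtain ⟨w, hw⟩ : ∃ w, ∑ i, Y i ^ e = c + powMul p s w :=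
    exists_eq_add_powMul (by simp only [map_sum, map_pow, hY, map_intCast, y.2.2])
  have hb : π (e * Y 0 ^ (e - 1)) ≠ 0 := by
    have hY0 : IsUnit (Y 0) :=
      (isUnit_castHom_pow_iff hs (s.le_add_right 1) _).1 (hY 0 ▸ (y.2.1 0).1)
    rw [map_mul, map_pow, map_natCast]
    exact mul_ne_zero (by rwa [Ne, natCast_eq_zero_iff]) (pow_ne_zero _ (hY0.map π).ne_zero)
  have lift_reduce (t : Fin (k + 1) → ZMod p) (i) : ρ (Y i + powMul p s (t i)) = y.1 i := by
    rw [map_add, castHom_powMul, add_zero, hY]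
  let liftSolution
      (t : {t : Fin (k + 1) → ZMod p // ∑ i, π (e * Y i ^ (e - 1)) * t i = -w}) :
      {x : ExcSolutions (ZMod (p ^ (s + 1))) (k + 1) c e // x.map ρ = y} :=
    ⟨⟨fun i => Y i + powMul p s (t.1 i), fun i => by
        rw [← isExceptionalUnit_castHom_pow_iff hs (s.le_add_right 1), lift_reduce]
        exact y.2.1 i, (sum_add_powMul_pow_eq_iff hs hw t.1).2 t.2⟩,
      Subtype.ext (funext (lift_reduce t.1))⟩
  have liftSolution_bijective : Function.Bijective liftSolution := by
    refine ⟨fun t t' htt' => Subtype.ext (funext fun i => powMul_injective (s := s) ?_), ?_⟩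
    · exact add_left_cancel (congrFun (congrArg (fun x => x.1.1) htt') i)
    rintro ⟨x, hx⟩
    choose t ht using fun i => exists_eq_add_powMul (x' := Y i) (by
      rw [hY, ← hx]; rfl : ρ (x.1 i) = ρ (Y i))
    have hxt : x.1 = fun i => Y i + powMul p s (t i) := funext ht
    have hsum := x.2.2
    rw [hxt] at hsum
    exact ⟨⟨t, (sum_add_powMul_pow_eq_iff hs hw t).1 hsum⟩, Subtype.ext (Subtype.ext hxt.symm)⟩
  rw [← Nat.card_eq_of_bijective _ liftSolution_bijective,
    card_linear_equation_solutions _ hb, Nat.card_zmod]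

theorem excCount_pow_succ {p : ℕ} [Fact p.Prime] {s : ℕ} (hs : s ≠ 0) {k : ℕ} {c : ℤ} {e : ℕ}
    (hpe : ¬ p ∣ e) :
    excCount (k + 1) c e (p ^ (s + 1)) = excCount (k + 1) c e (p ^ s) * p ^ k :=
  Nat.card_eq_card_mul_of_card_fiber _ (card_fiber_excSolutions_map hs hpe)

theorem excCount_prime_pow_general (k : ℕ) (hk : 2 ≤ k) (c : ℤ) (e : ℕ)
    (s : ℕ) (hs : 1 ≤ s) (p : ℕ) (hp : p.Prime) (hpe : ¬ p ∣ e) :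
    excCount k c e (p ^ s) = p ^ ((k - 1) * (s - 1)) * excCount k c e p := by
  have : Fact p.Prime := ⟨hp⟩
  obtain ⟨k, rfl⟩ : ∃ k', k = k' + 1 := ⟨k - 1, by omega⟩
  obtain ⟨s, rfl⟩ : ∃ s', s = s' + 1 := ⟨s - 1, by omega⟩
  simp only [Nat.add_sub_cancel]
  clear hk hs
  induction s with
  | zero => simp
  | succ s ih => rw [excCount_pow_succ s.add_one_ne_zero hpe, ih]; ring

theorem excCount_prime_pow (k : ℕ) (hk : 2 ≤ k) (c : ℤ) (e : ℕ) (he : 1 ≤ e)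
    (s : ℕ) (hs : 1 ≤ s) (p : ℕ) (hp : p.Prime) (hpe : ¬ p ∣ e) :
    excCount k c e (p ^ s) = p ^ ((k - 1) * (s - 1)) * excCount k c e p :=
  excCount_prime_pow_general k hk c e s hs p hp hpe
end

section
/- Let p be an odd prime and let k ≥ 2 and c be integers. Then p · 𝒩_{k,c,2}(p) = (−1)^k · [ (2−p)^k − Σ_{i=0}^{⌊k/2⌋} (−1)^{(p−1)i/2} p^i · C(k,2i) · ( 2^{k−2i} − p · Σ_{0 ≤ j ≤ k−2i, p | (j−c)} C(k−2i, j) ) − Σ_{i=0}^{⌊(k−1)/2⌋} (−1)^{(p−1)(i+1)/2} p^{i+1} · C(k,2i+1) · Σ_{0 ≤ j ≤ k−2i−1, p ∤ (j−c)} C(k−2i−1, j) · ((j−c)/p) ], where ((j−c)/p) denotes the Legendre symbol and C(a,b) the binomial coefficient. -/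
open Finset AddMonoidAlgebra

theorem Finset.sum_range_two_mul {M : Type*} [AddCommMonoid M] (f : ℕ → M) (t : ℕ) :
    ∑ m ∈ range (2 * t), f m = ∑ i ∈ range t, (f (2 * i) + f (2 * i + 1)) := by
  induction t with
  | zero => simp
  | succ t ih =>
    rw [mul_add, mul_one, sum_range_succ, sum_range_succ, sum_range_succ, ih, add_assoc]

theorem Finset.sum_range_succ_eq_even_add_odd {M : Type*} [AddCommMonoid M] (f : ℕ → M) (n : ℕ) :
    ∑ m ∈ range (n + 1), f m =
      ∑ i ∈ range (n / 2 + 1), f (2 * i) + ∑ i ∈ range ((n + 1) / 2), f (2 * i + 1) := by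
  obtain ⟨t, rfl | rfl⟩ := Nat.even_or_odd' n
  · rw [sum_range_succ, sum_range_two_mul, sum_add_distrib, sum_range_succ (fun i ↦ f (2 * i))]
    rw [show 2 * t / 2 = t by omega, show (2 * t + 1) / 2 = t by omega, add_right_comm]
  · rw [show 2 * t + 1 + 1 = 2 * (t + 1) by ring, sum_range_two_mul, sum_add_distrib,
      show (2 * t + 1) / 2 = t by omega, show 2 * (t + 1) / 2 = t + 1 by omega]

theorem add_pow_succ_of_mul_eq_zero {R : Type*} [CommSemiring R] {u x : R} (h : u * x = 0)
    (m : ℕ) : (u + x) ^ (m + 1) = u ^ (m + 1) + x ^ (m + 1) := by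
  induction m with
  | zero => simp
  | succ m ih =>
    have hu : u ^ (m + 1) * x = 0 := by rw [pow_succ, mul_assoc, h, mul_zero]
    have hx : x ^ (m + 1) * u = 0 := by rw [pow_succ, mul_assoc, mul_comm x, h, mul_zero]
    rw [pow_succ, ih, add_mul, mul_add, mul_add, hu, hx, add_zero, zero_add, ← pow_succ,
      ← pow_succ]

namespace AddMonoidAlgebra

variable {R G : Type*}

theorem coeff_sum_single_pow [CommSemiring R] [AddCommMonoid G] [DecidableEq G] {α : Type*}
    (s : Finset α) (f : α → G) (k : ℕ) (g : G) :
    ((∑ a ∈ s, single (f a) (1 : R)) ^ k).coeff g =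
      #{x ∈ Fintype.piFinset fun _ : Fin k ↦ s | ∑ i, f (x i) = g} := by
  rw [← Fin.prod_const, prod_univ_sum]
  simp only [prod_single, prod_const_one, AddMonoidAlgebra.coeff_sum, coeff_single,
    Finsupp.finsetSum_apply, Finsupp.single_apply]
  rw [sum_boole]

theorem coeff_sub_one_sub_single_pow [CommRing R] [AddCommGroup G] (Q : R[G]) (g c : G) (k : ℕ) :
    ((Q - 1 - single g 1) ^ k).coeff c =
      ∑ m ∈ range (k + 1), (k.choose m : R) * (-1) ^ (k - m) *
        ∑ j ∈ range (k - m + 1), ((k - m).choose j : R) * (Q ^ m).coeff (c - j • g) := by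
  rw [sub_sub, sub_eq_add_neg, add_pow, AddMonoidAlgebra.coeff_sum, Finsupp.finsetSum_apply]
  refine Finset.sum_congr rfl fun m _ ↦ ?_
  rw [neg_pow, add_comm (1 : R[G]), add_pow]
  simp only [single_pow, one_pow, mul_one, mul_sum, sum_mul, AddMonoidAlgebra.coeff_sum,
    Finsupp.finsetSum_apply]
  refine Finset.sum_congr rfl fun j _ ↦ ?_
  rw [natCast_def, natCast_def, ← neg_one_smul R (1 : R[G]), smul_pow, one_pow, one_def]
  simp only [smul_single, single_mul_single, coeff_mul_single_apply, zero_add, add_zero,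
    ← sub_eq_add_neg, sub_zero, smul_eq_mul]
  ring

section Fintype

variable [Semiring R] [Fintype G]

noncomputable def ofFun [AddMonoid G] (f : G → R) : R[G] := ∑ g, single g (f g)

@[simp]
theorem coeff_ofFun [AddMonoid G] (f : G → R) (g : G) : (ofFun f).coeff g = f g := by
  classical
  simp [ofFun, AddMonoidAlgebra.coeff_sum, Finsupp.single_apply]

variable [AddCommGroup G]

theorem ofFun_mul_ofFun (f h : G → R) :
    ofFun f * ofFun h = ofFun fun c ↦ ∑ a, f a * h (c - a) := by
  ext c
  rw [coeff_mul_apply_left, Finsupp.sum_fintype _ _ (by simp)]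
  simp [neg_add_eq_sub]

theorem ofFun_one_mul_ofFun (f : G → R) : ofFun 1 * ofFun f = (∑ a, f a) • ofFun 1 := by
  ext c
  rw [ofFun_mul_ofFun, coeff_smul_apply]
  simp only [coeff_ofFun, Pi.one_apply, one_mul, smul_eq_mul, mul_one]
  exact Fintype.sum_equiv (Equiv.subLeft c) _ _ (fun _ ↦ rfl)

theorem ofFun_one_pow_succ (m : ℕ) :
    (ofFun 1 : R[G]) ^ (m + 1) = (Fintype.card G : R) ^ m • ofFun 1 := by
  induction m with
  | zero => simp
  | succ m ih =>
    rw [pow_succ, ih, smul_mul_assoc, ofFun_one_mul_ofFun, smul_smul, pow_succ]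
    simp

end Fintype

end AddMonoidAlgebra

section Quadratic

variable {F : Type*} [Field F] [Fintype F] [DecidableEq F]

theorem sum_quadraticChar_mul_quadraticChar_sub (hF : ringChar F ≠ 2) (c : F) :
    ∑ a, quadraticChar F a * quadraticChar F (c - a) =
      quadraticChar F (-1) * ((if c = 0 then (Fintype.card F : ℤ) else 0) - 1) := by
  set χ := quadraticChar F
  rcases eq_or_ne c 0 with rfl | hc
  · have h : ∀ a, χ a * χ (0 - a) = χ (-1) * if a = 0 then 0 else 1 := by
      intro a
      rcases eq_or_ne a 0 with rfl | ha
      · simp [χ]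
      · rw [zero_sub, neg_eq_neg_one_mul, map_mul, if_neg ha, mul_left_comm, ← map_mul, ← sq,
          quadraticChar_sq_one' ha]
    simp only [h, ← mul_sum, if_pos, sum_ite, sum_const_zero, zero_add, filter_ne', sum_const,
      card_erase_of_mem (mem_univ _), card_univ, nsmul_one]
    rw [Nat.cast_sub Fintype.card_pos, Nat.cast_one]
  · have h : ∀ x, χ (c * x) * χ (c - c * x) = χ x * χ (1 - x) := by
      intro x
      rw [← mul_one_sub, map_mul, map_mul, mul_mul_mul_comm, ← sq, quadraticChar_sq_one hc, one_mul]
    rw [if_neg hc, zero_sub, mul_neg_one,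
      ← Fintype.sum_equiv (Equiv.mulLeft₀ c hc) _ _ (fun _ ↦ rfl)]
    simp only [Equiv.mulLeft₀_apply, h]
    rw [← jacobiSum_nontrivial_inv (quadraticChar_ne_one hF), (quadraticChar_isQuadratic F).inv]
    rfl

variable (F) in
noncomputable def sqSum : ℤ[F] := ∑ x : F, single (x ^ 2) 1

theorem sqSum_eq (hF : ringChar F ≠ 2) : sqSum F = ofFun 1 + ofFun (quadraticChar F) := by
  ext a
  rw [sqSum, AddMonoidAlgebra.coeff_sum, Finsupp.finsetSum_apply, coeff_add, Finsupp.add_apply,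
    coeff_ofFun, coeff_ofFun]
  simp only [coeff_single, Finsupp.single_apply, sum_boole, Pi.one_apply]
  rw [add_comm, ← quadraticChar_card_sqrts hF a]
  simp

theorem ofFun_quadraticChar_mul_self (hF : ringChar F ≠ 2) :
    ofFun (quadraticChar F) * ofFun (quadraticChar F) =
      quadraticChar F (-1) • ((Fintype.card F : ℤ[F]) - ofFun 1) := by
  ext c
  rw [ofFun_mul_ofFun, coeff_ofFun, sum_quadraticChar_mul_quadraticChar_sub hF, coeff_smul_apply,
    coeff_sub, Finsupp.sub_apply, coeff_natCast, coeff_ofFun, Finsupp.single_apply]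
  simp [eq_comm]

theorem ofFun_one_mul_ofFun_quadraticChar (hF : ringChar F ≠ 2) :
    ofFun 1 * ofFun (quadraticChar F) = 0 := by
  rw [ofFun_one_mul_ofFun, quadraticChar_sum_zero hF, zero_smul]

theorem ofFun_quadraticChar_pow_odd (hF : ringChar F ≠ 2) (i : ℕ) :
    ofFun (quadraticChar F) ^ (2 * i + 1) =
      (quadraticChar F (-1) * Fintype.card F) ^ i • ofFun (quadraticChar F) := by
  induction i with
  | zero => simp
  | succ i ih =>
    have hcard : ofFun (quadraticChar F) * (Fintype.card F : ℤ[F]) =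
        (Fintype.card F : ℤ) • ofFun (quadraticChar F) := by
      rw [Nat.cast_smul_eq_nsmul, nsmul_eq_mul']
    rw [show 2 * (i + 1) + 1 = 2 * i + 1 + 2 by ring, pow_add, ih, sq,
      ofFun_quadraticChar_mul_self hF, smul_mul_smul_comm, mul_sub, mul_comm _ (ofFun 1),
      ofFun_one_mul_ofFun_quadraticChar hF, sub_zero, hcard, smul_smul, pow_succ, mul_assoc]

theorem ofFun_quadraticChar_pow_even (hF : ringChar F ≠ 2) (i : ℕ) :
    ofFun (quadraticChar F) ^ (2 * i + 2) =
      (quadraticChar F (-1) ^ (i + 1) * (Fintype.card F : ℤ) ^ i) •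
        ((Fintype.card F : ℤ[F]) - ofFun 1) := by
  rw [pow_succ, ofFun_quadraticChar_pow_odd hF, smul_mul_assoc, ofFun_quadraticChar_mul_self hF,
    smul_smul]
  ring_nf

theorem card_mul_coeff_sqSum_pow_even (hF : ringChar F ≠ 2) (i : ℕ) (d : F) :
    Fintype.card F * ((sqSum F) ^ (2 * i)).coeff d =
      (Fintype.card F : ℤ) ^ (2 * i) + quadraticChar F (-1) ^ i * (Fintype.card F : ℤ) ^ i *
        ((if d = 0 then (Fintype.card F : ℤ) else 0) - 1) := by
  cases i with
  | zero =>
    rw [mul_zero, pow_zero, one_def, coeff_single, Finsupp.single_apply]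
    simp only [pow_zero, eq_comm (a := (0 : F))]
    split_ifs <;> ring
  | succ i =>
    rw [sqSum_eq hF, show 2 * (i + 1) = 2 * i + 1 + 1 by ring,
      add_pow_succ_of_mul_eq_zero (ofFun_one_mul_ofFun_quadraticChar hF), ofFun_one_pow_succ,
      ofFun_quadraticChar_pow_even hF]
    simp only [coeff_add, Finsupp.add_apply, coeff_smul_apply, coeff_sub, Finsupp.sub_apply,
      coeff_natCast, Finsupp.single_apply, coeff_ofFun, Pi.one_apply, smul_eq_mul,
      eq_comm (a := (0 : F))]
    ring

theorem card_mul_coeff_sqSum_pow_odd (hF : ringChar F ≠ 2) (i : ℕ) (d : F) :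
    Fintype.card F * ((sqSum F) ^ (2 * i + 1)).coeff d =
      (Fintype.card F : ℤ) ^ (2 * i + 1) +
        quadraticChar F (-1) ^ i * (Fintype.card F : ℤ) ^ (i + 1) * quadraticChar F d := by
  rw [sqSum_eq hF, add_pow_succ_of_mul_eq_zero (ofFun_one_mul_ofFun_quadraticChar hF),
    ofFun_one_pow_succ, ofFun_quadraticChar_pow_odd hF]
  simp only [coeff_add, Finsupp.add_apply, coeff_smul_apply, coeff_ofFun, Pi.one_apply,
    smul_eq_mul]
  ring

end Quadratic

section ZMod

variable {p : ℕ} [Fact p.Prime]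

theorem excCount_eq_coeff (k : ℕ) (c : ℤ) :
    (excCount k c 2 p : ℤ) = ((sqSum (ZMod p) - 1 - single 1 1) ^ k).coeff (c : ZMod p) := by
  classical
  have hsum : ∑ x ∈ univ \ {0, 1}, single (x ^ 2) (1 : ℤ) = sqSum (ZMod p) - 1 - single 1 1 := by
    rw [sqSum, ← sum_sdiff (subset_univ {0, 1}), sum_pair zero_ne_one, one_def]
    simp [sub_sub]
  rw [← hsum, coeff_sum_single_pow, excCount, Nat.card_eq_fintype_card, Fintype.card_subtype]
  congr 2
  ext x
  simp [Fintype.mem_piFinset, isUnit_iff_ne_zero, sub_eq_zero, eq_comm (a := (1 : ZMod p))]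

theorem card_mul_excCount (k : ℕ) (c : ℤ) :
    p * (excCount k c 2 p : ℤ) = (p - 2) ^ k +
      ∑ m ∈ range (k + 1), (k.choose m : ℤ) * (-1) ^ (k - m) *
        ∑ j ∈ range (k - m + 1), ((k - m).choose j : ℤ) *
          (p * ((sqSum (ZMod p)) ^ m).coeff (c - j) - p ^ m) := by
  have hbinom : ((p : ℤ) - 2) ^ k =
      ∑ m ∈ range (k + 1), (k.choose m : ℤ) * (-1) ^ (k - m) *
        ∑ j ∈ range (k - m + 1), ((k - m).choose j : ℤ) * p ^ m := by
    rw [sub_eq_add_neg, add_pow]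
    refine sum_congr rfl fun m _ ↦ ?_
    rw [← sum_mul, ← Nat.cast_sum, Nat.sum_range_choose, neg_pow, Nat.cast_pow, Nat.cast_ofNat]
    ring
  rw [excCount_eq_coeff, coeff_sub_one_sub_single_pow, hbinom, mul_sum, ← sum_add_distrib]
  refine sum_congr rfl fun m _ ↦ ?_
  simp only [nsmul_one, mul_sub, sum_sub_distrib, mul_sum, add_sub_cancel]
  exact sum_congr rfl fun j _ ↦ by ring

theorem ZMod.quadraticChar_neg_one_pow (hp2 : p ≠ 2) (i : ℕ) :
    quadraticChar (ZMod p) (-1) ^ i = (-1) ^ ((p - 1) * i / 2) := by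
  have hp : p % 2 = 1 := (Fact.out : p.Prime).eq_two_or_odd.resolve_left hp2
  rw [quadraticChar_neg_one ((ZMod.ringChar_zmod_n p).substr hp2), ZMod.card,
    ZMod.χ₄_eq_neg_one_pow hp, ← pow_mul]
  congr 1
  rw [show p - 1 = 2 * (p / 2) by omega, mul_assoc, Nat.mul_div_cancel_left _ two_pos]

theorem ZMod.intCast_sub_natCast_eq_zero_iff (c : ℤ) (j : ℕ) :
    (c : ZMod p) - j = 0 ↔ (p : ℤ) ∣ j - c := by
  rw [← ZMod.intCast_zmod_eq_zero_iff_dvd, ← neg_eq_zero, neg_sub]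
  push_cast
  rfl

theorem ZMod.quadraticChar_intCast_sub_natCast (c : ℤ) (j : ℕ) :
    quadraticChar (ZMod p) (c - j) = quadraticChar (ZMod p) (-1) * legendreSym p ((j : ℤ) - c) := by
  rw [legendreSym, ← map_mul]
  push_cast
  ring_nf

theorem sum_choose_mul_card_mul_coeff_sqSum_pow_even (hp2 : p ≠ 2) (n i : ℕ) (c : ℤ) :
    ∑ j ∈ range (n + 1), (n.choose j : ℤ) *
        (p * ((sqSum (ZMod p)) ^ (2 * i)).coeff (c - j) - p ^ (2 * i)) =
      (-1) ^ ((p - 1) * i / 2) * p ^ i *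
        (p * ∑ j ∈ (range (n + 1)).filter (fun j : ℕ ↦ (p : ℤ) ∣ j - c), (n.choose j : ℤ)
          - 2 ^ n) := by
  have h := card_mul_coeff_sqSum_pow_even ((ZMod.ringChar_zmod_n p).substr hp2) i
  simp only [ZMod.card] at h
  simp only [h, add_sub_cancel_left, ZMod.intCast_sub_natCast_eq_zero_iff,
    ZMod.quadraticChar_neg_one_pow hp2, sum_filter, mul_sum]
  rw [show (2 : ℤ) ^ n = ∑ j ∈ range (n + 1), (n.choose j : ℤ) by
    exact_mod_cast (Nat.sum_range_choose n).symm, ← sum_sub_distrib, mul_sum]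
  refine sum_congr rfl fun j _ ↦ ?_
  split_ifs <;> ring

theorem sum_choose_mul_card_mul_coeff_sqSum_pow_odd (hp2 : p ≠ 2) (n i : ℕ) (c : ℤ) :
    ∑ j ∈ range (n + 1), (n.choose j : ℤ) *
        (p * ((sqSum (ZMod p)) ^ (2 * i + 1)).coeff (c - j) - p ^ (2 * i + 1)) =
      (-1) ^ ((p - 1) * (i + 1) / 2) * p ^ (i + 1) *
        ∑ j ∈ (range (n + 1)).filter (fun j : ℕ ↦ ¬(p : ℤ) ∣ j - c),
          (n.choose j : ℤ) * legendreSym p (j - c) := by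
  have h := card_mul_coeff_sqSum_pow_odd ((ZMod.ringChar_zmod_n p).substr hp2) i
  simp only [ZMod.card] at h
  rw [sum_filter_of_ne fun j _ hj ↦ ?_]
  · simp only [h, add_sub_cancel_left, ZMod.quadraticChar_intCast_sub_natCast, mul_sum,
      ← ZMod.quadraticChar_neg_one_pow hp2]
    exact sum_congr rfl fun j _ ↦ by ring
  · rw [← ZMod.intCast_zmod_eq_zero_iff_dvd, ← legendreSym.eq_zero_iff]
    exact fun h0 ↦ hj (by rw [h0, mul_zero])

end ZMod

theorem excCount_odd_prime (p : ℕ) (hp : p.Prime) (hodd : Odd p)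
    (k : ℕ) (hk : 2 ≤ k) (c : ℤ) :
    (p : ℤ) * (excCount k c 2 p : ℤ) =
      (-1) ^ k *
        ((2 - (p : ℤ)) ^ k
          - ∑ i ∈ Finset.range (k / 2 + 1),
              (-1 : ℤ) ^ ((p - 1) * i / 2) * (p : ℤ) ^ i * (k.choose (2 * i) : ℤ) *
                ((2 : ℤ) ^ (k - 2 * i)
                  - (p : ℤ) *
                    ∑ j ∈ (Finset.range (k - 2 * i + 1)).filter
                        (fun (j : ℕ) => (p : ℤ) ∣ (j : ℤ) - c),
                      ((k - 2 * i).choose j : ℤ))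
          - ∑ i ∈ Finset.range ((k - 1) / 2 + 1),
              (-1 : ℤ) ^ ((p - 1) * (i + 1) / 2) * (p : ℤ) ^ (i + 1) *
                (k.choose (2 * i + 1) : ℤ) *
                ∑ j ∈ (Finset.range (k - 2 * i - 1 + 1)).filter
                    (fun (j : ℕ) => ¬ (p : ℤ) ∣ (j : ℤ) - c),
                  ((k - 2 * i - 1).choose j : ℤ) * @legendreSym p ⟨hp⟩ ((j : ℤ) - c)) := by
  have : Fact p.Prime := ⟨hp⟩
  have hp2 : p ≠ 2 := by rintro rfl; exact absurd hodd (by decide)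
  have hsign : ∀ m ≤ k, (-1 : ℤ) ^ (k - m) = (-1) ^ k * (-1) ^ m := fun m hm ↦ by
    obtain ⟨t, rfl⟩ := Nat.exists_eq_add_of_le hm
    rw [add_tsub_cancel_left, pow_add, mul_right_comm, ← mul_pow, neg_one_mul, neg_neg, one_pow,
      one_mul]
  rw [card_mul_excCount, sum_range_succ_eq_even_add_odd,
    show (k + 1) / 2 = (k - 1) / 2 + 1 by omega,
    mul_sub, mul_sub, mul_sum, mul_sum, ← mul_pow, show -1 * (2 - (p : ℤ)) = p - 2 by ring,
    sub_sub, sub_eq_add_neg _ (_ + _), neg_add, ← sum_neg_distrib, ← sum_neg_distrib]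
  -- both sides now read `(p - 2) ^ k + (∑ even-index terms + ∑ odd-index terms)`
  congr 2 <;> refine sum_congr rfl fun i hi ↦ ?_
  · rw [sum_choose_mul_card_mul_coeff_sqSum_pow_even hp2, hsign _ (by grind), pow_mul, neg_one_sq,
      one_pow]
    ring
  · rw [Nat.sub_sub, sum_choose_mul_card_mul_coeff_sqSum_pow_odd hp2, hsign _ (by grind), pow_succ,
      pow_mul, neg_one_sq, one_pow]
    ring
end

section
/- Let p be a prime not dividing an integer e ≥ 1, let k ≥ 2, c and s ≥ 1 be integers, and let (a_1, ..., a_k) be a k-tuple of exceptional units of ℤ_p with a_1^e + ⋯ + a_k^e ≡ c (mod p). Then for every (k−1)-tuple (b_1, ..., b_{k−1}) of elements of ℤ_{p^s} divisible by p, there exists a unique a' ∈ ℤ_{p^s} with a' ≡ a_k (mod p) such that (a_1 + b_1, ..., a_{k−1} + b_{k−1}, a') is a k-tuple of exceptional units of ℤ_{p^s} satisfying (a_1+b_1)^e + ⋯ + (a_{k−1}+b_{k−1})^e + a'^e ≡ c (mod p^s). -/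
/-!
The residues modulo `p^s` of the first `k - 1` entries are prescribed, so everything comes down
to solving `x ^ e = t` modulo `p^s` with `x` in the residue class of a given unit `u` modulo `p`,
where `t ≡ u ^ e`. Reduction `(ZMod (p^s))ˣ → (ZMod p)ˣ` is surjective with kernel of order
`p^(s-1)`, which is prime to `e`; hence `e`-th powers are bijective on the kernel, and `x ↦ x ^ e`
maps each fibre of the reduction bijectively onto a fibre.
-/

theorem MonoidHom.existsUnique_map_eq_and_pow_eq {G H : Type*} [CommGroup G] [Group H]
    (f : G →* H) (hf : Function.Surjective f) {e : ℕ} (he : (Nat.card f.ker).Coprime e)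
    {g : G} {h : H} (hgh : f g = h ^ e) :
    ∃! x : G, f x = h ∧ x ^ e = g := by
  obtain ⟨x₀, rfl⟩ := hf h
  have hw : g / x₀ ^ e ∈ f.ker := by simp [hgh]
  obtain ⟨v, hv⟩ := (powCoprime he).surjective ⟨_, hw⟩
  have hve : (v : G) ^ e = g / x₀ ^ e := congrArg Subtype.val hv
  refine ⟨x₀ * v, ⟨by simp [f.mem_ker.mp v.2], by rw [mul_pow, hve, mul_div_cancel]⟩, ?_⟩
  rintro y ⟨hy, rfl⟩
  have hz : y / (x₀ * v) ∈ f.ker := by simp [hy, f.mem_ker.mp v.2]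
  have hze : (powCoprime he) ⟨_, hz⟩ = powCoprime he 1 := by
    ext
    simp [powCoprime, div_pow, mul_pow, hve]
  simpa [div_eq_one] using congrArg Subtype.val ((powCoprime he).injective hze)

namespace ZMod

theorem card_ker_unitsMap_mul_totient {m n : ℕ} [NeZero m] (hnm : n ∣ m) :
    Nat.card (unitsMap hnm).ker * n.totient = m.totient := by
  have : NeZero n := ⟨fun hn => NeZero.ne m (Nat.eq_zero_of_zero_dvd (hn ▸ hnm))⟩
  rw [← card_units_eq_totient, ← card_units_eq_totient, ← Nat.card_eq_fintype_card,
    ← Nat.card_eq_fintype_card, mul_comm, ← Nat.card_congr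
      (QuotientGroup.quotientKerEquivOfSurjective _ (unitsMap_surjective hnm)).toEquiv]
  exact (Subgroup.card_eq_card_quotient_mul_card_subgroup _).symm

theorem card_ker_unitsMap_prime_pow {p s : ℕ} (hp : p.Prime) (hs : s ≠ 0) :
    Nat.card (unitsMap (dvd_pow_self p hs)).ker = p ^ (s - 1) := by
  have : NeZero (p ^ s) := ⟨pow_ne_zero s hp.ne_zero⟩
  have h := card_ker_unitsMap_mul_totient (dvd_pow_self p hs)
  rw [Nat.totient_prime hp, Nat.totient_prime_pow hp (Nat.pos_of_ne_zero hs)] at h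
  exact Nat.eq_of_mul_eq_mul_right (Nat.sub_pos_of_lt hp.one_lt) h

theorem isUnit_castHom_pow_iff_s7 {p s : ℕ} [NeZero p] (hs : s ≠ 0) (x : ZMod (p ^ s)) :
    IsUnit (castHom (dvd_pow_self p hs) (ZMod p) x) ↔ IsUnit x := by
  rw [← natCast_zmod_val x, map_natCast, isUnit_iff_coprime, isUnit_iff_coprime,
    Nat.coprime_pow_right_iff (Nat.pos_of_ne_zero hs)]

theorem castHom_natCast_val_add_of_dvd {m n : ℕ} [NeZero n] (hnm : n ∣ m) (u : ZMod n)
    {b : ZMod m} (hb : (n : ZMod m) ∣ b) :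
    castHom hnm (ZMod n) ((u.val : ZMod m) + b) = u := by
  obtain ⟨x, rfl⟩ := hb
  rw [map_add, map_mul, map_natCast, map_natCast, natCast_zmod_val, natCast_self, zero_mul,
    add_zero]

theorem existsUnique_castHom_eq_and_pow_eq {p e s : ℕ} (hp : p.Prime) (hpe : ¬ p ∣ e)
    (hs : s ≠ 0) {u : ZMod p} (hu : IsUnit u) {t : ZMod (p ^ s)}
    (ht : castHom (dvd_pow_self p hs) (ZMod p) t = u ^ e) :
    ∃! x : ZMod (p ^ s), castHom (dvd_pow_self p hs) (ZMod p) x = u ∧ x ^ e = t := by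
  have : NeZero p := ⟨hp.ne_zero⟩
  have : NeZero (p ^ s) := ⟨pow_ne_zero s hp.ne_zero⟩
  have hcop : (Nat.card (unitsMap (dvd_pow_self p hs)).ker).Coprime e := by
    rw [card_ker_unitsMap_prime_pow hp hs]
    exact Nat.Coprime.pow_left _ (hp.coprime_iff_not_dvd.mpr hpe)
  have htu : IsUnit t := (isUnit_castHom_pow_iff_s7 hs t).mp (ht ▸ hu.pow e)
  obtain ⟨X, ⟨hXu, hXt⟩, hX⟩ :=
    (unitsMap (dvd_pow_self p hs)).existsUnique_map_eq_and_pow_eq (unitsMap_surjective _) hcop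
      (g := htu.unit) (h := hu.unit)
      (Units.ext (by rw [Units.val_pow_eq_pow_val, IsUnit.unit_spec, ← ht]; rfl))
  refine ⟨X, ⟨congrArg Units.val hXu, by simp [← Units.val_pow_eq_pow_val, hXt]⟩, ?_⟩
  rintro y ⟨hyu, hyt⟩
  have hy : IsUnit y := (isUnit_castHom_pow_iff_s7 hs y).mp (hyu ▸ hu)
  rw [← hy.unit_spec, hX hy.unit ⟨Units.ext (by rw [unitsMap_val, hy.unit_spec]; exact hyu),
    Units.ext (by rw [Units.val_pow_eq_pow_val, hy.unit_spec, hyt]; rfl)⟩]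

end ZMod

/-- Hensel-type lifting of exceptional-unit solutions of
`x₁^e + ⋯ + x_k^e ≡ c (mod p)` to solutions modulo `p^s`: the entries
`a i` of the solution modulo `p` are regarded as integers in `{0, ..., p-1}`
(via `ZMod.val`) and then reduced modulo `p^s`. -/
theorem hensel_lift_exceptional (p : ℕ) (hp : p.Prime) (e : ℕ)
    (hpe : ¬ p ∣ e) (k : ℕ) (hk : 2 ≤ k) (c : ℤ) (s : ℕ) (hs : 1 ≤ s)
    (a : Fin k → ZMod p)
    (ha : ∀ i, IsUnit (a i) ∧ IsUnit (1 - a i))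
    (hsum : ∑ i, (a i) ^ e = (c : ZMod p))
    (b : Fin (k - 1) → ZMod (p ^ s))
    (hb : ∀ i, (p : ZMod (p ^ s)) ∣ b i) :
    ∃! a' : ZMod (p ^ s),
      ZMod.castHom (dvd_pow_self p (by omega : s ≠ 0)) (ZMod p) a' = a ⟨k - 1, by omega⟩ ∧
      (∀ i : Fin (k - 1),
        IsUnit (((a (Fin.castLE (by omega) i)).val : ZMod (p ^ s)) + b i) ∧
        IsUnit (1 - (((a (Fin.castLE (by omega) i)).val : ZMod (p ^ s)) + b i))) ∧
      IsUnit a' ∧ IsUnit (1 - a') ∧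
      (∑ i : Fin (k - 1), (((a (Fin.castLE (by omega) i)).val : ZMod (p ^ s)) + b i) ^ e)
        + a' ^ e = (c : ZMod (p ^ s)) := by
  have : NeZero p := ⟨hp.ne_zero⟩
  obtain ⟨m, rfl⟩ : ∃ m, k = m + 1 := ⟨k - 1, by omega⟩
  have hs' : s ≠ 0 := by omega
  set φ := ZMod.castHom (dvd_pow_self p hs') (ZMod p)
  have hφ (i : Fin m) : φ ((a (Fin.castSucc i)).val + b i) = a (Fin.castSucc i) :=
    ZMod.castHom_natCast_val_add_of_dvd _ _ (hb i)
  have hexc {x : ZMod (p ^ s)} {u : ZMod p} (hx : φ x = u) (hu : IsUnit u ∧ IsUnit (1 - u)) :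
      IsUnit x ∧ IsUnit (1 - x) := by
    simp only [← ZMod.isUnit_castHom_pow_iff_s7 hs', map_sub, map_one]
    exact hx ▸ hu
  set t : ZMod (p ^ s) := c - ∑ i : Fin m, ((a (Fin.castSucc i)).val + b i) ^ e
  have ht : φ t = a (Fin.last m) ^ e := by
    simp only [t, map_sub, map_intCast, map_sum, map_pow, hφ, ← hsum, Fin.sum_univ_castSucc]
    ring
  obtain ⟨x, ⟨hx, hxt⟩, hxu⟩ := ZMod.existsUnique_castHom_eq_and_pow_eq hp hpe hs' (ha _).1 ht
  obtain ⟨hx₁, hx₂⟩ := hexc hx (ha _)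
  refine ⟨x, ⟨hx, fun i => hexc (hφ i) (ha _), hx₁, hx₂, ?_⟩, ?_⟩
  · rw [hxt]
    exact add_sub_cancel _ _
  rintro y ⟨hy, -, -, -, hysum⟩
  exact hxu y ⟨hy, eq_sub_of_add_eq' hysum⟩
end
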